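/- Let F be a field, G₁ and G₂ groups, and G = G₁ × G₂. Let V be an irreducible FG-module that has an irreducible FG₂-submodule V₂ (under the restricted G₂-action) with End_{FG₂}(V₂) = F. Then there exists an irreducible FG₁-module V₁ such that V ≅ V₁ ⊗_F V₂ as FG-modules, where G acts on V₁ ⊗_F V₂ by (g₁,g₂)(v₁⊗v₂) = g₁v₁ ⊗ g₂v₂. -/

import Mathlib

open scoped TensorProduct DirectSum

section Preliminaries

variable (F : Type*) [Field F]

/-- Isomorphism (equivalence) of representations: an `F`-linear equivalence intertwining
the two actions. -/
def RepIso {G : Type*} [Monoid G] {V V' : Type*} [AddCommMonoid V] [Module F V]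
    [AddCommMonoid V'] [Module F V'] (ρ : Representation F G V) (τ : Representation F G V') :
    Prop :=
  ∃ e : V ≃ₗ[F] V', ∀ (g : G) (v : V), e (ρ g v) = τ g (e v)

/-- Irreducibility of a representation: the space is nonzero and admits no invariant
subspaces other than `⊥` and `⊤`. -/
def IsIrreducibleRep {G : Type*} [Monoid G] {V : Type*} [AddCommMonoid V] [Module F V]
    (ρ : Representation F G V) : Prop :=
  Nontrivial V ∧ ∀ p : Submodule F V, (∀ g : G, ∀ v ∈ p, ρ g v ∈ p) → p = ⊥ ∨ p = ⊤

/-- The subrepresentation on an invariant submodule. -/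
def subRep {G : Type*} [Monoid G] {V : Type*} [AddCommMonoid V] [Module F V]
    (ρ : Representation F G V) (p : Submodule F V) (hp : ∀ g : G, ∀ v ∈ p, ρ g v ∈ p) :
    Representation F G ↥p where
  toFun g := (ρ g).restrict (fun v hv => hp g v hv)
  map_one' := by ext v; simp [LinearMap.restrict_apply]
  map_mul' g₁ g₂ := by ext v; simp [LinearMap.restrict_apply]

/-- A representation is completely reducible if the underlying module is the sum of its
irreducible invariant submodules. -/
def IsCompletelyReducibleRep {G : Type*} [Monoid G] {V : Type*} [AddCommMonoid V]
    [Module F V] (ρ : Representation F G V) : Prop :=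
  sSup {q : Submodule F V |
    ∃ hq : ∀ g : G, ∀ v ∈ q, ρ g v ∈ q, IsIrreducibleRep F (subRep F ρ q hq)} = ⊤

/-- The homogeneous component determined by `σ`: the sum of all irreducible invariant
submodules whose subrepresentation is isomorphic to `σ`. -/
noncomputable def homComponent {G : Type*} [Monoid G] {V W : Type*} [AddCommMonoid V]
    [Module F V] [AddCommMonoid W] [Module F W] (ρ : Representation F G V)
    (σ : Representation F G W) : Submodule F V :=
  sSup {q : Submodule F V |
    ∃ hq : ∀ g : G, ∀ v ∈ q, ρ g v ∈ q,
      IsIrreducibleRep F (subRep F ρ q hq) ∧ RepIso F (subRep F ρ q hq) σ}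

/-- The set of all homogeneous components of a representation. -/
noncomputable def homComponents {G : Type*} [Monoid G] {V : Type*} [AddCommMonoid V]
    [Module F V] (ρ : Representation F G V) : Set (Submodule F V) :=
  {S | ∃ (q : Submodule F V) (hq : ∀ g : G, ∀ v ∈ q, ρ g v ∈ q),
      IsIrreducibleRep F (subRep F ρ q hq) ∧ S = homComponent F ρ (subRep F ρ q hq)}

/-- A representation `ρ` lies over `σ` if it admits an invariant submodule whose
subrepresentation is isomorphic to `σ`. -/
def LiesOver {G : Type*} [Monoid G] {V W : Type*} [AddCommMonoid V] [Module F V]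
    [AddCommMonoid W] [Module F W] (ρ : Representation F G V) (σ : Representation F G W) :
    Prop :=
  ∃ (q : Submodule F V) (hq : ∀ g : G, ∀ v ∈ q, ρ g v ∈ q),
    RepIso F (subRep F ρ q hq) σ

/-- The stabilizer in `G` of a subspace of a representation space. -/
def stabSubgroup {G : Type*} [Group G] {V : Type*} [AddCommGroup V] [Module F V]
    (ρ : Representation F G V) (S : Submodule F V) : Subgroup G where
  carrier := {g : G | S.map (ρ g) = S}
  one_mem' := by
    show S.map (ρ 1) = S
    rw [map_one, Module.End.one_eq_id]
    exact Submodule.map_id S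
  mul_mem' := by
    intro a b ha hb
    show S.map (ρ (a * b)) = S
    rw [map_mul, Module.End.mul_eq_comp, Submodule.map_comp, hb, ha]
  inv_mem' := by
    intro a ha
    show S.map (ρ a⁻¹) = S
    conv_lhs => rw [← ha]
    rw [← Submodule.map_comp, ← Module.End.mul_eq_comp, ← map_mul, inv_mul_cancel, map_one,
      Module.End.one_eq_id, Submodule.map_id]

theorem stabSubgroup_mapsTo {G : Type*} [Group G] {V : Type*} [AddCommGroup V] [Module F V]
    (ρ : Representation F G V) (S : Submodule F V) :
    ∀ g : ↥(stabSubgroup F ρ S), ∀ v ∈ S, ρ (g : G) v ∈ S := by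
  intro g v hv
  have hg : S.map (ρ (g : G)) = S := g.2
  have := Submodule.mem_map_of_mem (f := ρ (g : G)) hv
  rwa [hg] at this

/-- Outer tensor product of representations of two groups. -/
noncomputable def outerRep {G₁ G₂ : Type*} [Monoid G₁] [Monoid G₂] {V₁ V₂ : Type*}
    [AddCommMonoid V₁] [Module F V₁] [AddCommMonoid V₂] [Module F V₂]
    (ρ₁ : Representation F G₁ V₁) (ρ₂ : Representation F G₂ V₂) :
    Representation F (G₁ × G₂) (V₁ ⊗[F] V₂) :=
  Representation.tprod (ρ₁.comp (MonoidHom.fst G₁ G₂)) (ρ₂.comp (MonoidHom.snd G₁ G₂))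

/-- A projective representation with factor set `α`. -/
def IsProjRep {G : Type*} [Group G] {W : Type*} [AddCommGroup W] [Module F W]
    (X : G → (W →ₗ[F] W)) (α : G → G → Fˣ) : Prop :=
  (∀ g : G, Function.Bijective (X g)) ∧
    ∀ g₁ g₂ : G, (X g₁) ∘ₗ (X g₂) = ((α g₁ g₂ : F)) • X (g₁ * g₂)

/-- Irreducibility of a projective representation: no proper nonzero invariant subspace. -/
def IsProjIrred {G : Type*} [Group G] {W : Type*} [AddCommGroup W] [Module F W]
    (X : G → (W →ₗ[F] W)) : Prop :=
  Nontrivial W ∧ ∀ p : Submodule F W, (∀ g : G, ∀ w ∈ p, X g w ∈ p) → p = ⊥ ∨ p = ⊤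

/-- `D` is a system of representatives for the `(H₁,H₂)`-double cosets in `G`. -/
def IsDCosetReps {G : Type*} [Group G] (H₁ H₂ : Subgroup G) (D : Set G) : Prop :=
  ∀ g : G, ∃! d : G, d ∈ D ∧ ∃ h₁ ∈ H₁, ∃ h₂ ∈ H₂, g = h₁ * d * h₂

end Preliminaries

section Induction

variable (F : Type*) [Field F] {G : Type*} [Group G] (H : Subgroup G)
variable {W : Type*} [AddCommGroup W] [Module F W] (σ : Representation F ↥H W)

/-- The submodule of relations defining the induced module `FG ⊗_{FH} W` as a quotient
of `FG ⊗_F W`. -/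
noncomputable def indRel : Submodule (MonoidAlgebra F G) (MonoidAlgebra F G ⊗[F] W) :=
  Submodule.span (MonoidAlgebra F G)
    {z | ∃ (x : H) (w : W),
      z = (MonoidAlgebra.single (x : G) (1 : F)) ⊗ₜ[F] w
            - (1 : MonoidAlgebra F G) ⊗ₜ[F] (σ x w)}

/-- The underlying space of the induced module `ind_H^G W = FG ⊗_{FH} W`. -/
noncomputable def IndCar := (MonoidAlgebra F G ⊗[F] W) ⧸ indRel F H σ

noncomputable instance : AddCommGroup (IndCar F H σ) :=
  inferInstanceAs (AddCommGroup ((MonoidAlgebra F G ⊗[F] W) ⧸ indRel F H σ))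

noncomputable instance : Module (MonoidAlgebra F G) (IndCar F H σ) :=
  inferInstanceAs (Module (MonoidAlgebra F G) ((MonoidAlgebra F G ⊗[F] W) ⧸ indRel F H σ))

noncomputable instance : Module F (IndCar F H σ) :=
  inferInstanceAs (Module F ((MonoidAlgebra F G ⊗[F] W) ⧸ indRel F H σ))

noncomputable instance : IsScalarTower F (MonoidAlgebra F G) (IndCar F H σ) :=
  inferInstanceAs (IsScalarTower F (MonoidAlgebra F G)
    ((MonoidAlgebra F G ⊗[F] W) ⧸ indRel F H σ))

/-- The induced representation of `G` on `ind_H^G W = FG ⊗_{FH} W`. -/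
noncomputable def IndRep : Representation F G (IndCar F H σ) where
  toFun g :=
    { toFun := fun v => (MonoidAlgebra.single g (1 : F) : MonoidAlgebra F G) • v
      map_add' := fun a b => smul_add _ a b
      map_smul' := fun c v => smul_comm _ c v }
  map_one' := by
    ext v
    show MonoidAlgebra.single (1 : G) (1 : F) • v = v
    rw [← MonoidAlgebra.one_def, one_smul]
  map_mul' g₁ g₂ := by
    ext v
    show MonoidAlgebra.single (g₁ * g₂) (1 : F) • v = _
    rw [show (MonoidAlgebra.single (g₁ * g₂) (1 : F) : MonoidAlgebra F G)
          = MonoidAlgebra.single g₁ 1 * MonoidAlgebra.single g₂ 1 by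
        rw [MonoidAlgebra.single_mul_single, one_mul], mul_smul]
    rfl

end Induction

section DirectSums

variable (F : Type*) [Field F] {G : Type*} [Monoid G]

/-- The direct sum of a family of representations. -/
noncomputable def dsumRep {ι : Type*} {V : ι → Type*} [∀ i, AddCommGroup (V i)]
    [∀ i, Module F (V i)] (ρ : ∀ i, Representation F G (V i)) :
    Representation F G (⨁ i, V i) where
  toFun g := DFinsupp.mapRange.linearMap (fun i => ρ i g)
  map_one' := by
    simp only [map_one]
    exact DFinsupp.mapRange.linearMap_id
  map_mul' g₁ g₂ := by
    simp only [map_mul, Module.End.mul_eq_comp]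
    exact DFinsupp.mapRange.linearMap_comp (fun i => ρ i g₁) (fun i => ρ i g₂)

end DirectSums

section Conjugation

variable {G : Type*} [Group G]

/-- Conjugation `x ↦ g x g⁻¹` as a monoid homomorphism of a normal subgroup. -/
def conjHom {N : Subgroup G} (hN : N.Normal) (g : G) : ↥N →* ↥N where
  toFun x := ⟨g * (x : G) * g⁻¹, hN.conj_mem x.1 x.2 g⟩
  map_one' := by ext; simp
  map_mul' x y := by ext; simp [mul_assoc]

/-- The conjugate subgroup `xHx⁻¹`. -/
def conjSubgroup (x : G) (H : Subgroup G) : Subgroup G :=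
  H.map (MulAut.conj x).toMonoidHom

/-- Conjugating back: the homomorphism `K → H`, `k ↦ x⁻¹ k x`, for `K ≤ xHx⁻¹`. -/
def unconjHom (x : G) (H : Subgroup G) {K : Subgroup G} (hK : K ≤ conjSubgroup x H) :
    ↥K →* ↥H where
  toFun k := ⟨x⁻¹ * (k : G) * x, by
    obtain ⟨h, hh, e⟩ := hK k.2
    have : x⁻¹ * (k : G) * x = h := by
      rw [← e]; simp [MulAut.conj_apply, mul_assoc]
    rw [this]; exact hh⟩
  map_one' := by ext; simp
  map_mul' a b := by
    ext
    show x⁻¹ * (↑a * ↑b) * x = (x⁻¹ * ↑a * x) * (x⁻¹ * ↑b * x)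
    group

/-- The homomorphism `K ∩ xHx⁻¹ → H` (with the source regarded as a subgroup of `K`),
given by `k ↦ x⁻¹ k x`. -/
def mackeyHom (x : G) (H K : Subgroup G) :
    ↥((K ⊓ conjSubgroup x H).subgroupOf K) →* ↥H where
  toFun l := ⟨x⁻¹ * ((l : ↥K) : G) * x, by
    have h2 : ((l : ↥K) : G) ∈ K ⊓ conjSubgroup x H := l.2
    obtain ⟨h, hh, e⟩ := h2.2
    have : x⁻¹ * ((l : ↥K) : G) * x = h := by
      rw [← e]; simp [MulAut.conj_apply, mul_assoc]
    rw [this]; exact hh⟩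
  map_one' := by ext; simp
  map_mul' a b := by
    ext
    show x⁻¹ * (↑↑a * ↑↑b) * x = (x⁻¹ * ↑↑a * x) * (x⁻¹ * ↑↑b * x)
    group

end Conjugation

universe u

/-!
The factor `V₁` is the multiplicity space `Hom_{G₂}(V₂, V)`, on which `G₁` acts by
post-composition with `ρ (g₁, 1)`; this preserves `G₂`-equivariance because `G₁` and `G₂`
commute in `G₁ × G₂`. Evaluation `V₁ ⊗ V₂ → V` is `G`-equivariant and nonzero, hence onto since
`V` is irreducible. It is injective by the Jacobson density theorem: as `End_{FG₂}(V₂) = F`,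
every `F`-linear endomorphism of `V₂` agrees on finitely many vectors with some element of `FG₂`,
and such elements separate the coefficients of a tensor written against a basis of `V₂`.
Finally `V₁` is irreducible, since an invariant subspace `U ≤ V₁` gives the invariant subspace
`U ⊗ V₂` of `V₁ ⊗ V₂ ≅ V`.
-/

open scoped MonoidAlgebra

theorem jacobson_density_of_forall_end_eq_smul {F A M : Type*} [Field F] [Ring A] [Algebra F A]
    [AddCommGroup M] [Module A M] [Module F M] [IsScalarTower F A M] [IsSemisimpleModule A M]
    (hEnd : ∀ f : M →ₗ[A] M, ∃ c : F, ∀ v, f v = c • v) (g : M →ₗ[F] M) (s : Finset M) :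
    ∃ a : A, ∀ m ∈ s, g m = a • m :=
  jacobson_density
    { toFun := g
      map_add' := g.map_add
      map_smul' := fun φ m => by
        obtain ⟨c, hc⟩ := hEnd φ
        simp only [Module.End.smul_def, RingHom.id_apply, hc, map_smul] } s

section Irreducible

variable {F G W W' : Type*} [Field F] [Monoid G] [AddCommGroup W] [Module F W]
  [AddCommGroup W'] [Module F W'] {σ : Representation F G W} {τ : Representation F G W'}

open Representation

def HasScalarEndomorphisms (σ : Representation F G W) : Prop :=
  ∀ f : W →ₗ[F] W, (∀ (g : G) (w : W), f (σ g w) = σ g (f w)) → ∃ c : F, ∀ w : W, f w = c • w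

theorem IsIrreducibleRep.isIrreducible (hσ : IsIrreducibleRep F σ) : σ.IsIrreducible := by
  obtain ⟨hW, hσ⟩ := hσ
  have : Nontrivial (Subrepresentation σ) :=
    ⟨⊥, ⊤, fun h => bot_ne_top (congrArg Subrepresentation.toSubmodule h)⟩
  refine { eq_bot_or_eq_top := fun S => ?_ }
  exact (hσ S.toSubmodule fun g _ hv => S.apply_mem_toSubmodule g hv).imp
    (fun h => Subrepresentation.toSubmodule_injective h)
    (fun h => Subrepresentation.toSubmodule_injective h)

theorem IsIrreducibleRep.exists_asAlgebraHom_eq (hσ : IsIrreducibleRep F σ)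
    (hEnd : HasScalarEndomorphisms σ) (f : W →ₗ[F] W) (s : Finset W) :
    ∃ a : F[G], ∀ w ∈ s, f w = σ.asAlgebraHom a w := by
  have := hσ.isIrreducible
  refine jacobson_density_of_forall_end_eq_smul (A := F[G]) (M := σ.asModule) (fun φ => ?_)
    (σ.asModuleEquiv.symm.conj f) s
  let ψ := (IntertwiningMap.equivLinearMapAsModule σ σ).symm φ
  exact hEnd ψ.toLinearMap ψ.isIntertwining

theorem Representation.IntertwiningMap.map_asAlgebraHom (f : IntertwiningMap σ τ) (a : F[G])
    (w : W) : f (σ.asAlgebraHom a w) = τ.asAlgebraHom a (f w) :=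
  (IntertwiningMap.equivLinearMapAsModule σ τ f).map_smul a w

theorem RepIso.symm (h : RepIso F σ τ) : RepIso F τ σ :=
  let ⟨e, he⟩ := h
  ⟨e.symm, fun g v => e.injective (by rw [he, e.apply_symm_apply, e.apply_symm_apply])⟩

theorem IsIrreducibleRep.of_repIso (hσ : IsIrreducibleRep F σ) (h : RepIso F σ τ) :
    IsIrreducibleRep F τ := by
  obtain ⟨e, he⟩ := h
  have := hσ.1
  refine ⟨e.symm.toEquiv.nontrivial, fun q hq => ?_⟩
  have hq' : ∀ g w, w ∈ q.comap e.toLinearMap → σ g w ∈ q.comap e.toLinearMap := fun g w hw => by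
    simpa [he] using hq g _ hw
  rw [← Submodule.map_comap_eq_of_surjective e.surjective q]
  rcases hσ.2 _ hq' with h | h <;> simp [h]

end Irreducible

theorem Submodule.mem_of_tmul_mem_range_rTensor {F M W : Type*} [Field F] [AddCommGroup M]
    [Module F M] [AddCommGroup W] [Module F W] (p : Submodule F M) {x : M} {w : W} (hw : w ≠ 0)
    (h : x ⊗ₜ w ∈ LinearMap.range (p.subtype.rTensor W)) : x ∈ p := by
  obtain ⟨φ, hφ⟩ := Module.Projective.exists_dual_eq_one F hw
  -- `L (y ⊗ w') = φ w' • y` retracts `y ↦ y ⊗ w` and maps `p ⊗ W` into `p`.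
  let L := (TensorProduct.rid F M).toLinearMap ∘ₗ φ.lTensor M
  have hL : L ∘ₗ p.subtype.rTensor W =
      p.subtype ∘ₗ (TensorProduct.rid F p).toLinearMap ∘ₗ φ.lTensor p :=
    TensorProduct.ext' fun _ _ => by simp [L]
  obtain ⟨y, hy⟩ := h
  have hx : x = L (x ⊗ₜ w) := by simp [L, hφ]
  rw [hx, ← hy, ← LinearMap.comp_apply, hL]
  exact Submodule.coe_mem _

theorem IsIrreducibleRep.of_outerRep {F G₁ G₂ V₁ W : Type*} [Field F] [Monoid G₁] [Monoid G₂]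
    [AddCommGroup V₁] [Module F V₁] [AddCommGroup W] [Module F W] {ρ₁ : Representation F G₁ V₁}
    {σ : Representation F G₂ W} [Nontrivial W] (h : IsIrreducibleRep F (outerRep F ρ₁ σ)) :
    IsIrreducibleRep F ρ₁ := by
  obtain ⟨w, hw⟩ := exists_ne (0 : W)
  have := h.1
  refine ⟨?_, fun p hp => ?_⟩
  · by_contra hV₁
    rw [not_nontrivial_iff_subsingleton] at hV₁
    exact not_subsingleton (V₁ ⊗[F] W) inferInstance
  let T := LinearMap.range (p.subtype.rTensor W)
  have hT : ∀ g, ∀ t ∈ T, outerRep F ρ₁ σ g t ∈ T := by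
    rintro ⟨g₁, g₂⟩ _ ⟨t, rfl⟩
    refine ⟨TensorProduct.map ((ρ₁ g₁).restrict (hp g₁)) (σ g₂) t, ?_⟩
    induction t using TensorProduct.induction_on with
    | zero => simp
    | tmul x y => rfl
    | add x y hx hy => simp only [map_add, hx, hy]
  have hpT : p = T.comap ((TensorProduct.mk F V₁ W).flip w) :=
    le_antisymm (fun x hx => ⟨⟨x, hx⟩ ⊗ₜ w, rfl⟩) fun x hx => p.mem_of_tmul_mem_range_rTensor hw hx
  rcases h.2 T hT with hT | hT
  · refine .inl (eq_bot_iff.2 fun x hx => ?_)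
    simp only [hpT, hT, Submodule.mem_comap, Submodule.mem_bot, LinearMap.flip_apply,
      TensorProduct.mk_apply] at hx
    exact (⊥ : Submodule F V₁).mem_of_tmul_mem_range_rTensor hw (hx ▸ zero_mem _)
  · rw [hpT, hT, Submodule.comap_top]
    exact .inr rfl

section Multiplicity

variable {F G₁ G₂ V W : Type*} [Field F] [Monoid G₁] [Monoid G₂] [AddCommGroup V] [Module F V]
  [AddCommGroup W] [Module F W] (ρ : Representation F (G₁ × G₂) V) (σ : Representation F G₂ W)

open Representation TensorProduct

theorem Representation.commute_apply_mk_one_apply_one_mk (g₁ : G₁) (g₂ : G₂) :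
    Commute (ρ (g₁, 1)) (ρ (1, g₂)) := by
  simp only [Commute, SemiconjBy, ← map_mul, Prod.mk_mul_mk, mul_one, one_mul]

noncomputable def multiplicityRep :
    Representation F G₁ (IntertwiningMap σ (ρ.comp (MonoidHom.inr G₁ G₂))) where
  toFun g₁ := IntertwiningMap.llcomp σ _ _
    ⟨ρ (g₁, 1), fun g₂ => (ρ.commute_apply_mk_one_apply_one_mk g₁ g₂).eq⟩
  map_one' := by
    ext f w
    change ρ (1, 1) (f w) = f w
    rw [Prod.mk_one_one, map_one, Module.End.one_apply]
  map_mul' g g' := by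
    ext f w
    change ρ (g * g', 1) (f w) = ρ (g, 1) (ρ (g', 1) (f w))
    rw [← Module.End.mul_apply, ← map_mul, Prod.mk_mul_mk, one_mul]

noncomputable def evalTensor : IntertwiningMap (outerRep F (multiplicityRep ρ σ) σ) ρ where
  toLinearMap := lift
    { toFun := IntertwiningMap.toLinearMap
      map_add' _ _ := rfl
      map_smul' _ _ := rfl }
  isIntertwining' g := ext' fun f w => by
    obtain ⟨g₁, g₂⟩ := g
    change ρ (g₁, 1) (f (σ g₂ w)) = ρ (g₁, g₂) (f w)
    rw [f.isIntertwining, MonoidHom.comp_apply, MonoidHom.inr_apply, ← Module.End.mul_apply,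
      ← map_mul, Prod.mk_mul_mk, mul_one, one_mul]

@[simp]
theorem evalTensor_tmul (f : IntertwiningMap σ (ρ.comp (MonoidHom.inr G₁ G₂))) (w : W) :
    evalTensor ρ σ (f ⊗ₜ w) = f w :=
  rfl

theorem evalTensor_injective (hσ : IsIrreducibleRep F σ) (hEnd : HasScalarEndomorphisms σ) :
    Function.Injective (evalTensor ρ σ) := by
  classical
  let b := Module.Basis.ofVectorSpace F W
  refine (injective_iff_map_eq_zero _).2 fun t ht => ?_
  obtain ⟨c, rfl⟩ := eq_repr_basis_right b t
  suffices c = 0 by simp [this]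
  ext j w
  obtain ⟨a, ha⟩ := hσ.exists_asAlgebraHom_eq hEnd (b.constr F fun i => if i = j then w else 0)
    (c.support.image b)
  have hac : ∀ i ∈ c.support, asAlgebraHom (ρ.comp (MonoidHom.inr G₁ G₂)) a (c i (b i))
      = if i = j then c i w else 0 := by
    intro i hi
    rw [← IntertwiningMap.map_asAlgebraHom, ← ha _ (Finset.mem_image_of_mem b hi),
      Module.Basis.constr_basis, apply_ite (c i), map_zero]
  have := congrArg (asAlgebraHom (ρ.comp (MonoidHom.inr G₁ G₂)) a) ht
  simp only [map_finsuppSum, evalTensor_tmul, map_zero] at this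
  rw [Finsupp.sum, Finset.sum_congr rfl hac, Finset.sum_ite_eq'] at this
  split_ifs at this with hj
  · exact this
  · simp [Finsupp.notMem_support_iff.1 hj]

theorem repIso_outerRep_multiplicityRep (hρ : IsIrreducibleRep F ρ) (hσ : IsIrreducibleRep F σ)
    (hEnd : HasScalarEndomorphisms σ) {f : IntertwiningMap σ (ρ.comp (MonoidHom.inr G₁ G₂))}
    (hf : f ≠ 0) : RepIso F (outerRep F (multiplicityRep ρ σ) σ) ρ := by
  have := hρ.isIrreducible
  have hne : evalTensor ρ σ ≠ 0 := fun h => hf <| by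
    ext w
    simpa using DFunLike.congr_fun h (f ⊗ₜ w)
  have hsurj := (IsIrreducible.surjective_or_eq_zero (evalTensor ρ σ)).resolve_right hne
  exact ⟨.ofBijective (evalTensor ρ σ).toLinearMap ⟨evalTensor_injective ρ σ hσ hEnd, hsurj⟩,
    (evalTensor ρ σ).isIntertwining⟩

end Multiplicity

/-- Theorem 3.11(b): let `G = G₁ × G₂` and let `V` be an irreducible `FG`-module with an
irreducible `FG₂`-submodule `V₂` such that `End_{FG₂}(V₂) = F`.  Then there is an
irreducible `FG₁`-module `V₁` with `V ≅ V₁ ⊗_F V₂` as `FG`-modules. -/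
theorem outer_tensor_factorization
    (F : Type*) [Field F] (G₁ G₂ : Type*) [Group G₁] [Group G₂]
    (V : Type u) [AddCommGroup V] [Module F V] (ρ : Representation F (G₁ × G₂) V)
    (hρ : IsIrreducibleRep F ρ)
    (p : Submodule F V)
    (hp : ∀ g₂ : G₂, ∀ v ∈ p, (ρ.comp (MonoidHom.inr G₁ G₂)) g₂ v ∈ p)
    (hpirr : IsIrreducibleRep F (subRep F (ρ.comp (MonoidHom.inr G₁ G₂)) p hp))
    (hEnd : ∀ f : ↥p →ₗ[F] ↥p,
      (∀ (g : G₂) (v : ↥p), f ((subRep F (ρ.comp (MonoidHom.inr G₁ G₂)) p hp) g v)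
          = (subRep F (ρ.comp (MonoidHom.inr G₁ G₂)) p hp) g (f v)) →
        ∃ c : F, ∀ v : ↥p, f v = c • v) :
    ∃ (V₁ : Type u) (_ : AddCommGroup V₁) (_ : Module F V₁)
      (ρ₁ : Representation F G₁ V₁),
      IsIrreducibleRep F ρ₁ ∧
        RepIso F ρ (outerRep F ρ₁ (subRep F (ρ.comp (MonoidHom.inr G₁ G₂)) p hp)) := by
  let σ := subRep F (ρ.comp (MonoidHom.inr G₁ G₂)) p hp
  have : Nontrivial p := hpirr.1
  let ι : Representation.IntertwiningMap σ (ρ.comp (MonoidHom.inr G₁ G₂)) :=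
    ⟨p.subtype, fun _ => rfl⟩
  have hι : ι ≠ 0 := fun h => by
    obtain ⟨w, hw⟩ := exists_ne (0 : p)
    exact hw (Subtype.ext (DFunLike.congr_fun h w))
  have hiso := repIso_outerRep_multiplicityRep ρ σ hρ hpirr hEnd hι
  exact ⟨_, _, _, multiplicityRep ρ σ, (hρ.of_repIso hiso.symm).of_outerRep, hiso.symm⟩
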